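/- arXiv:2101.07363 — 7 statements merged into one kernel-verified Lean document; each statement's English description precedes it below -/
import Mathlib

section
/- If T is a nilpotent operator of order r > 2 (T^r = 0, T^{r-1} ≠ 0), then T is (A,(2r−2, 2r−1))-isosymmetric for any positive operator A, i.e. Ω_A^{2r−2,2r−1}(T) = 0. -/
open ContinuousLinearMap

/-- `Ω_A^{m,n}(T)` given by the double sum. -/
noncomputable def Omega {H : Type*} [NormedAddCommGroup H] [InnerProductSpace ℂ H]
    [CompleteSpace H] (A T : H →L[ℂ] H) (m n : ℕ) : H →L[ℂ] H :=
  ∑ j ∈ Finset.range (m + 1), ∑ k ∈ Finset.range (n + 1),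
    ((-1 : ℂ) ^ (m + n - (j + k)) * (m.choose j : ℂ) * (n.choose k : ℂ)) •
      (((adjoint T) ^ (k + j)) ∘L A ∘L (T ^ (n + j - k)))

/-- A term of `Ω_A^{m,n}(T)` carries `T*^(k+j)` and `T^(n+j-k)`; when `k + j < r` and `2r ≤ n + 1`
the second exponent is at least `n + 1 - r ≥ r`, so one of the two powers vanishes. -/
theorem Omega_eq_zero_of_pow_eq_zero {H : Type*} [NormedAddCommGroup H] [InnerProductSpace ℂ H]
    [CompleteSpace H] (A : H →L[ℂ] H) {T : H →L[ℂ] H} {r m n : ℕ} (hTr : T ^ r = 0)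
    (hn : 2 * r - 1 ≤ n) : Omega A T m n = 0 := by
  refine Finset.sum_eq_zero fun j _ => Finset.sum_eq_zero fun k hk => ?_
  rw [Finset.mem_range] at hk
  rcases le_or_gt r (k + j) with h | h
  · have hT : adjoint T ^ (k + j) = 0 := by
      rw [← star_eq_adjoint, ← star_pow, pow_eq_zero_of_le h hTr, star_zero]
    simp [hT]
  · have hT : T ^ (n + j - k) = 0 := pow_eq_zero_of_le (by omega) hTr
    simp [hT]

theorem nilpotent_isosymmetric_general {H : Type*} [NormedAddCommGroup H] [InnerProductSpace ℂ H]
    [CompleteSpace H] (A T : H →L[ℂ] H) (r : ℕ)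
    (hTr : T ^ r = 0) :
    Omega A T (2 * r - 2) (2 * r - 1) = 0 :=
  Omega_eq_zero_of_pow_eq_zero A hTr le_rfl

theorem nilpotent_isosymmetric {H : Type*} [NormedAddCommGroup H] [InnerProductSpace ℂ H]
    [CompleteSpace H] (A T : H →L[ℂ] H) (hA : A.IsPositive) (r : ℕ) (hr : 2 < r)
    (hTr : T ^ r = 0) (hTr1 : T ^ (r - 1) ≠ 0) :
    Omega A T (2 * r - 2) (2 * r - 1) = 0 :=
  nilpotent_isosymmetric_general A T r hTr
end

section
/- If T is invertible and (A,(m,n))-isosymmetric, then T^{-1} is (A,(m,n))-isosymmetric. -/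
/-!
Conjugation by `S = T⁻¹`, `Ω ↦ (S*)^{m+n} Ω S^{m+n}`, cancels the powers of `T` and `T*` in
the `(j, k)` term of `Ω_A^{m,n}(T)` against those of `S` and `S*`, leaving the `(m - j, n - k)`
term of `Ω_A^{m,n}(S)` up to the sign `(-1)^{m+n}`. Hence `Ω_A^{m,n}(S)` vanishes with
`Ω_A^{m,n}(T)`.
-/

open ContinuousLinearMap

open Finset

lemma pow_mul_pow_of_mul_eq_one {M : Type*} [Monoid M] {t s : M} (h : t * s = 1) {a b : ℕ}
    (hab : a ≤ b) : t ^ a * s ^ b = s ^ (b - a) := by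
  rw [← Nat.add_sub_cancel' hab, pow_add, ← mul_assoc, pow_mul_pow_eq_one a h, one_mul,
    Nat.add_sub_cancel_left]

lemma pow_mul_pow_of_mul_eq_one' {M : Type*} [Monoid M] {t s : M} (h : s * t = 1) {a b : ℕ}
    (hab : a ≤ b) : s ^ b * t ^ a = s ^ (b - a) := by
  rw [← Nat.sub_add_cancel hab, pow_add, mul_assoc, pow_mul_pow_eq_one a h, mul_one,
    Nat.add_sub_cancel]

lemma neg_one_pow_mul_neg_one_pow_sub {R : Type*} [Monoid R] [HasDistribNeg R] {i N : ℕ}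
    (h : i ≤ N) : (-1 : R) ^ N * (-1) ^ (N - i) = (-1) ^ i := by
  rw [← pow_add, show N + (N - i) = i + 2 * (N - i) by omega, pow_add, pow_mul, neg_one_sq,
    one_pow, mul_one]

section Omega

variable {H : Type*} [NormedAddCommGroup H] [InnerProductSpace ℂ H] [CompleteSpace H]

lemma adjoint_mul_adjoint_eq_one {T S : H →L[ℂ] H} (hTS : T * S = 1) :
    adjoint S * adjoint T = 1 := by
  rw [← star_eq_adjoint, ← star_eq_adjoint, ← star_mul, hTS, star_one]

lemma conj_pow_omega_term (A : H →L[ℂ] H) {T S : H →L[ℂ] H} (hTS : T * S = 1)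
    {m n j k : ℕ} (hj : j ≤ m) (hk : k ≤ n) :
    adjoint S ^ (m + n) * (adjoint T ^ (k + j) * (A * T ^ (n + j - k))) * S ^ (m + n) =
      adjoint S ^ (n - k + (m - j)) * (A * S ^ (n + (m - j) - (n - k))) := by
  calc _ = (adjoint S ^ (m + n) * adjoint T ^ (k + j)) *
            (A * (T ^ (n + j - k) * S ^ (m + n))) := by
          simp only [mul_assoc]
    _ = adjoint S ^ (m + n - (k + j)) * (A * S ^ (m + n - (n + j - k))) := by
          rw [pow_mul_pow_of_mul_eq_one' (adjoint_mul_adjoint_eq_one hTS) (by omega),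
            pow_mul_pow_of_mul_eq_one hTS (by omega)]
    _ = _ := by
          rw [show m + n - (k + j) = n - k + (m - j) by omega,
            show m + n - (n + j - k) = n + (m - j) - (n - k) by omega]

theorem Omega_eq_conj_of_mul_eq_one (A : H →L[ℂ] H) {T S : H →L[ℂ] H} (hTS : T * S = 1)
    (m n : ℕ) :
    Omega A S m n =
      (-1 : ℂ) ^ (m + n) • (adjoint S ^ (m + n) * Omega A T m n * S ^ (m + n)) := by
  simp only [Omega, ← ContinuousLinearMap.mul_def, mul_sum, sum_mul, smul_sum, mul_smul_comm,
    smul_mul_assoc, smul_smul]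
  rw [← sum_range_reflect]
  refine sum_congr rfl fun j hj => ?_
  rw [← sum_range_reflect]
  refine sum_congr rfl fun k hk => ?_
  have hj : j ≤ m := Nat.lt_succ_iff.mp (mem_range.mp hj)
  have hk : k ≤ n := Nat.lt_succ_iff.mp (mem_range.mp hk)
  rw [Nat.add_sub_cancel, Nat.add_sub_cancel, conj_pow_omega_term A hTS hj hk,
    Nat.choose_symm hj, Nat.choose_symm hk, show m + n - (m - j + (n - k)) = j + k by omega,
    ← neg_one_pow_mul_neg_one_pow_sub (by omega : j + k ≤ m + n)]
  simp only [mul_assoc]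

end Omega

theorem inv_isosymmetric_general {H : Type*} [NormedAddCommGroup H] [InnerProductSpace ℂ H]
    [CompleteSpace H] (A T S : H →L[ℂ] H)
    (hTS : T ∘L S = 1) (m n : ℕ)
    (h : Omega A T m n = 0) : Omega A S m n = 0 := by
  rw [Omega_eq_conj_of_mul_eq_one A hTS, h, mul_zero, zero_mul, smul_zero]

theorem inv_isosymmetric {H : Type*} [NormedAddCommGroup H] [InnerProductSpace ℂ H]
    [CompleteSpace H] (A T S : H →L[ℂ] H) (hA : A.IsPositive)
    (hTS : T ∘L S = 1) (hST : S ∘L T = 1) (m n : ℕ)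
    (h : Omega A T m n = 0) : Omega A S m n = 0 :=
  inv_isosymmetric_general A T S hTS m n h
end

section
/- If T is (A,(m,n))-isosymmetric, then T^k is (A,(m,n))-isosymmetric for every positive integer k. -/
/-!
`Ω_A^{m,n}(T)` is the image of `(yx - 1)^m (y - x)^n` under the hereditary calculus
`x ↦ (· T)`, `y ↦ (T* ·)` applied to `A`, and replacing `T` by `T^k` amounts to substituting
`x^k, y^k` for `x, y`. As `yx - 1 ∣ y^k x^k - 1` and `y - x ∣ y^k - x^k`, the substituted
polynomial is `q · (yx - 1)^m (y - x)^n`, whose image is the calculus of `q` applied to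
`Ω_A^{m,n}(T) = 0` in place of `A`.
-/

open ContinuousLinearMap

open MvPolynomial

section HereditaryEval

variable {R B : Type*} [CommSemiring R] [Semiring B] [Algebra R B]

/-- Agler's hereditary functional calculus: `X 0` acts by right multiplication by `s` and `X 1`
by left multiplication by `t`, so that `X 0 ^ i * X 1 ^ j ↦ t ^ j * a * s ^ i`. -/
noncomputable def hereditaryEval (s t a : B) : MvPolynomial (Fin 2) R →ₗ[R] B :=
  (basisMonomials (Fin 2) R).constr R fun d => t ^ d 1 * a * s ^ d 0

@[simp]
theorem hereditaryEval_monomial (s t a : B) (d : Fin 2 →₀ ℕ) (c : R) :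
    hereditaryEval s t a (monomial d c) = c • (t ^ d 1 * a * s ^ d 0) := by
  have hc : monomial d c = c • monomial d (1 : R) := by rw [smul_monomial, smul_eq_mul, mul_one]
  have hb : monomial d (1 : R) = basisMonomials (Fin 2) R d := by rw [coe_basisMonomials]
  rw [hc, map_smul, hereditaryEval, hb, Module.Basis.constr_basis]

@[simp]
theorem hereditaryEval_zero (s t : B) (p : MvPolynomial (Fin 2) R) :
    hereditaryEval s t 0 p = 0 := by
  rw [hereditaryEval, show (fun d : Fin 2 →₀ ℕ => t ^ d 1 * 0 * s ^ d 0) = 0 by simp [Pi.zero_def]]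
  simp

theorem hereditaryEval_C_mul_X_pow_mul_X_pow (s t a : B) (c : R) (i j : ℕ) :
    hereditaryEval s t a (C c * X 0 ^ i * X 1 ^ j) = c • (t ^ j * a * s ^ i) := by
  rw [X_pow_eq_monomial, X_pow_eq_monomial, C_mul_monomial, monomial_mul, mul_one, mul_one,
    hereditaryEval_monomial]
  simp

theorem hereditaryEval_mul (s t a : B) (p q : MvPolynomial (Fin 2) R) :
    hereditaryEval s t a (q * p) = hereditaryEval s t (hereditaryEval s t a p) q := by
  induction q using MvPolynomial.induction_on' with
  | monomial e c =>
    induction p using MvPolynomial.induction_on' with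
    | monomial d c' =>
      simp only [monomial_mul, hereditaryEval_monomial, Finsupp.add_apply]
      rw [add_comm (e 0), pow_add, pow_add]
      simp only [mul_smul_comm, smul_mul_assoc, smul_smul, mul_assoc]
    | add p p' hp hp' => simp [mul_add, hp, hp', add_mul, smul_add]
  | add q q' hq hq' => rw [add_mul, map_add, map_add, hq, hq']

theorem hereditaryEval_pow (s t a : B) (k : ℕ) (p : MvPolynomial (Fin 2) R) :
    hereditaryEval (s ^ k) (t ^ k) a p = hereditaryEval s t a (expand k p) := by
  induction p using MvPolynomial.induction_on' with
  | monomial d c => simp [← pow_mul, mul_comm k]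
  | add p q hp hq => rw [map_add, map_add, hp, hq, map_add]

end HereditaryEval

section IsosymmetricPoly

variable (R : Type*) [CommRing R]

noncomputable def isosymmetricPoly (m n : ℕ) : MvPolynomial (Fin 2) R :=
  (X 1 * X 0 - 1) ^ m * (X 1 - X 0) ^ n

theorem isosymmetricPoly_eq_sum (m n : ℕ) :
    isosymmetricPoly R m n = ∑ j ∈ Finset.range (m + 1), ∑ k ∈ Finset.range (n + 1),
      C ((-1) ^ (m + n - (j + k)) * (m.choose j : R) * (n.choose k : R)) *
        X 0 ^ (n + j - k) * X 1 ^ (k + j) := by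
  rw [isosymmetricPoly, sub_eq_add_neg _ (1 : MvPolynomial (Fin 2) R), add_pow,
    sub_eq_add_neg (X 1), add_pow, Finset.sum_mul_sum]
  refine Finset.sum_congr rfl fun j hj => Finset.sum_congr rfl fun k hk => ?_
  have hjm := Finset.mem_range_succ_iff.mp hj
  have hkn := Finset.mem_range_succ_iff.mp hk
  rw [show m + n - (j + k) = (m - j) + (n - k) by omega, show n + j - k = j + (n - k) by omega]
  simp only [map_mul, map_pow, map_neg, map_one, map_natCast]
  ring

theorem isosymmetricPoly_dvd_expand (m n k : ℕ) :
    isosymmetricPoly R m n ∣ expand k (isosymmetricPoly R m n) := by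
  simp only [isosymmetricPoly, map_mul, map_pow, map_sub, map_one, expand_X, ← mul_pow]
  have hxy : X 1 * X 0 - 1 ∣ (X 1 * X 0 : MvPolynomial (Fin 2) R) ^ k - 1 := by
    simpa using sub_dvd_pow_sub_pow (X 1 * X 0 : MvPolynomial (Fin 2) R) 1 k
  exact mul_dvd_mul (pow_dvd_pow_of_dvd hxy m) (pow_dvd_pow_of_dvd (sub_dvd_pow_sub_pow _ _ k) n)

end IsosymmetricPoly

theorem Omega_eq_hereditaryEval {H : Type*} [NormedAddCommGroup H] [InnerProductSpace ℂ H]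
    [CompleteSpace H] (A T : H →L[ℂ] H) (m n : ℕ) :
    Omega A T m n = hereditaryEval T (adjoint T) A (isosymmetricPoly ℂ m n) := by
  simp only [isosymmetricPoly_eq_sum, map_sum, hereditaryEval_C_mul_X_pow_mul_X_pow]
  rfl

theorem pow_isosymmetric_general {H : Type*} [NormedAddCommGroup H] [InnerProductSpace ℂ H]
    [CompleteSpace H] (A T : H →L[ℂ] H) (m n k : ℕ)
    (h : Omega A T m n = 0) : Omega A (T ^ k) m n = 0 := by
  obtain ⟨q, hq⟩ := isosymmetricPoly_dvd_expand ℂ m n k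
  have hadj : adjoint (T ^ k) = adjoint T ^ k := by
    simp only [← star_eq_adjoint, star_pow]
  rw [Omega_eq_hereditaryEval, hadj, hereditaryEval_pow, hq, mul_comm, hereditaryEval_mul,
    ← Omega_eq_hereditaryEval, h, hereditaryEval_zero]

theorem pow_isosymmetric {H : Type*} [NormedAddCommGroup H] [InnerProductSpace ℂ H]
    [CompleteSpace H] (A T : H →L[ℂ] H) (hA : A.IsPositive) (m n k : ℕ) (hk : 1 ≤ k)
    (h : Omega A T m n = 0) : Omega A (T ^ k) m n = 0 :=
  pow_isosymmetric_general A T m n k h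
end

section
/- Let R₁, R₂, S₁, S₂ be bounded operators with R₁R₂ = R₂R₁ and S₁S₂ = S₂S₁. If Σ_{i=0}^m (-1)^{m−i} binom(m,i) R₁^i A S₁^i = 0 (R₁ is a left (A,m)-inverse of S₁) and Σ_{j=0}^n (-1)^{n−j} binom(n,j) R₂^j A S₂^j = 0 (R₂ is a left (A,n)-inverse of S₂), then Σ_{s=0}^{m+n−1} (-1)^{m+n−1−s} binom(m+n−1,s) (R₁R₂)^s A (S₁S₂)^s = 0, i.e. R₁R₂ is a left (A,m+n−1)-inverse of S₁S₂. -/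
/-!
With `T X = R * X * S` on `H →L[ℂ] H`, "`R` is a left `(A, m)`-inverse of `S`" says
`(T - 1) ^ m A = 0`, because `T ^ i A = R ^ i * A * S ^ i`. The operators `T₁`, `T₂` of `(R₁, S₁)`
and `(R₂, S₂)` commute and `T₁ * T₂` is the operator of `(R₁ * R₂, S₁ * S₂)`. In
`T₁ * T₂ - 1 = (T₁ - 1) * T₂ + (T₂ - 1)` the summands commute, so every term of the binomial
expansion of the `(m + n - 1)`-th power contains `(T₁ - 1) ^ m` or `(T₂ - 1) ^ n`, both of which
kill `A`.
-/

open Finset LinearMap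

namespace Commute

variable {R M : Type*} [Ring R] [AddCommGroup M] [Module R M]

theorem add_pow_smul_eq_zero_of_add_le_succ {x y : R} (h : Commute x y) {v : M} {m n k : ℕ}
    (hx : x ^ m • v = 0) (hy : y ^ n • v = 0) (hk : m + n ≤ k + 1) :
    (x + y) ^ k • v = 0 := by
  rw [h.add_pow', sum_smul]
  refine sum_eq_zero fun ⟨i, j⟩ hij => ?_
  rw [HasAntidiagonal.mem_antidiagonal] at hij
  suffices (x ^ i * y ^ j) • v = 0 by rw [smul_assoc, this, smul_zero]
  by_cases hi : m ≤ i
  · rw [(h.pow_pow i j).eq, ← pow_sub_mul_pow x hi, ← mul_assoc, mul_smul, hx, smul_zero]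
  · rw [← pow_sub_mul_pow y (show n ≤ j by omega), ← mul_assoc, mul_smul, hy, smul_zero]

theorem mul_sub_one_pow_smul_eq_zero {a b : R} (h : Commute a b) {v : M} {m n : ℕ}
    (ha : (a - 1) ^ m • v = 0) (hb : (b - 1) ^ n • v = 0) :
    (a * b - 1) ^ (m + n - 1) • v = 0 := by
  have hab : Commute (a - 1) b := h.sub_left (Commute.one_left b)
  have hsplit : a * b - 1 = (a - 1) * b + (b - 1) := by noncomm_ring
  have hx : ((a - 1) * b) ^ m • v = 0 := by
    rw [hab.mul_pow, (hab.pow_pow m m).eq, mul_smul, ha, smul_zero]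
  have hcomm : Commute ((a - 1) * b) (b - 1) :=
    (hab.sub_right (Commute.one_right _)).mul_left
      ((Commute.refl b).sub_right (Commute.one_right b))
  rw [hsplit]
  exact hcomm.add_pow_smul_eq_zero_of_add_le_succ hx hb (by omega)

end Commute

section Sandwich

variable {𝕜 A : Type*} [CommRing 𝕜] [Ring A] [Algebra 𝕜 A]

theorem sub_one_pow_eq_sum (x : A) (m : ℕ) :
    (x - 1) ^ m =
      ∑ i ∈ range (m + 1), ((-1 : 𝕜) ^ (m - i) * (m.choose i : 𝕜)) • x ^ i := by
  rw [sub_eq_add_neg, ← neg_one_smul 𝕜 (1 : A),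
    ((Commute.one_right x).smul_right (-1 : 𝕜)).add_pow]
  refine sum_congr rfl fun i _ => ?_
  rw [smul_pow, one_pow, mul_smul_comm, mul_one, smul_mul_assoc, ← Nat.cast_comm,
    ← nsmul_eq_mul, mul_smul, Nat.cast_smul_eq_nsmul]

theorem mulLeftRight_mul (a₁ b₁ a₂ b₂ : A) :
    mulLeftRight 𝕜 (a₁, b₁) * mulLeftRight 𝕜 (a₂, b₂) =
      mulLeftRight 𝕜 (a₁ * a₂, b₂ * b₁) := by
  ext x
  simp only [Module.End.mul_apply, mulLeftRight_apply, mul_assoc]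

theorem mulLeftRight_pow (a b : A) (n : ℕ) :
    mulLeftRight 𝕜 (a, b) ^ n = mulLeftRight 𝕜 (a ^ n, b ^ n) := by
  induction n with
  | zero => ext x; simp
  | succ n ih => rw [pow_succ, ih, mulLeftRight_mul, pow_succ, pow_succ']

theorem commute_mulLeftRight {a₁ b₁ a₂ b₂ : A} (ha : Commute a₁ a₂)
    (hb : Commute b₁ b₂) :
    Commute (mulLeftRight 𝕜 (a₁, b₁)) (mulLeftRight 𝕜 (a₂, b₂)) := by
  rw [Commute, SemiconjBy, mulLeftRight_mul, mulLeftRight_mul, ha.eq, hb.eq]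

theorem sub_one_pow_mulLeftRight_apply (a b x : A) (m : ℕ) :
    ((mulLeftRight 𝕜 (a, b) - 1) ^ m) x =
      ∑ i ∈ range (m + 1),
        ((-1 : 𝕜) ^ (m - i) * (m.choose i : 𝕜)) • (a ^ i * x * b ^ i) := by
  simp only [sub_one_pow_eq_sum (𝕜 := 𝕜), LinearMap.sum_apply, LinearMap.smul_apply,
    mulLeftRight_pow, mulLeftRight_apply]

end Sandwich

theorem left_inverse_product_general {H : Type*} [NormedAddCommGroup H] [InnerProductSpace ℂ H]
    (A R₁ R₂ S₁ S₂ : H →L[ℂ] H) (m n : ℕ)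
    (hR : R₁ ∘L R₂ = R₂ ∘L R₁) (hS : S₁ ∘L S₂ = S₂ ∘L S₁)
    (h1 : ∑ i ∈ Finset.range (m + 1),
        ((-1 : ℂ) ^ (m - i) * (m.choose i : ℂ)) • ((R₁ ^ i) ∘L A ∘L (S₁ ^ i)) = 0)
    (h2 : ∑ j ∈ Finset.range (n + 1),
        ((-1 : ℂ) ^ (n - j) * (n.choose j : ℂ)) • ((R₂ ^ j) ∘L A ∘L (S₂ ^ j)) = 0) :
    ∑ s ∈ Finset.range (m + n - 1 + 1),
      ((-1 : ℂ) ^ (m + n - 1 - s) * ((m + n - 1).choose s : ℂ)) •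
        (((R₁ ∘L R₂) ^ s) ∘L A ∘L ((S₁ ∘L S₂) ^ s)) = 0 := by
  simp only [← ContinuousLinearMap.mul_def, ← mul_assoc] at hR hS h1 h2 ⊢
  rw [← sub_one_pow_mulLeftRight_apply] at h1 h2 ⊢
  rw [hS, ← mulLeftRight_mul]
  rw [← Module.End.smul_def] at h1 h2 ⊢
  exact (commute_mulLeftRight hR hS).mul_sub_one_pow_smul_eq_zero h1 h2

theorem left_inverse_product {H : Type*} [NormedAddCommGroup H] [InnerProductSpace ℂ H]
    [CompleteSpace H] (A R₁ R₂ S₁ S₂ : H →L[ℂ] H) (hA : A.IsPositive)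
    (m n : ℕ) (hm : 1 ≤ m) (hn : 1 ≤ n)
    (hR : R₁ ∘L R₂ = R₂ ∘L R₁) (hS : S₁ ∘L S₂ = S₂ ∘L S₁)
    (h1 : ∑ i ∈ Finset.range (m + 1),
        ((-1 : ℂ) ^ (m - i) * (m.choose i : ℂ)) • ((R₁ ^ i) ∘L A ∘L (S₁ ^ i)) = 0)
    (h2 : ∑ j ∈ Finset.range (n + 1),
        ((-1 : ℂ) ^ (n - j) * (n.choose j : ℂ)) • ((R₂ ^ j) ∘L A ∘L (S₂ ^ j)) = 0) :
    ∑ s ∈ Finset.range (m + n - 1 + 1),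
      ((-1 : ℂ) ^ (m + n - 1 - s) * ((m + n - 1).choose s : ℂ)) •
        (((R₁ ∘L R₂) ^ s) ∘L A ∘L ((S₁ ∘L S₂) ^ s)) = 0 :=
  left_inverse_product_general A R₁ R₂ S₁ S₂ m n hR hS h1 h2
end

section
/- Let T be (A,(m,n))-isosymmetric and assume 0 ∉ σ_ap(A). If λ ∈ σ_ap(T), then |λ| = 1 or λ ∈ ℝ. Consequently ∂σ(T) ⊆ ∂D ∪ ℝ. -/
open ContinuousLinearMap

/--  is in the approximate point spectrum of . -/
def InApproxSpectrum {H : Type*} [NormedAddCommGroup H] [InnerProductSpace ℂ H]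
    [CompleteSpace H] (T : H →L[ℂ] H) (lam : ℂ) : Prop :=
  ∃ u : ℕ → H, (∀ j, ‖u j‖ = 1) ∧
    Filter.Tendsto (fun j => ‖(T - lam • (1 : H →L[ℂ] H)) (u j)‖) Filter.atTop (nhds 0)

/-!
If `T uᵢ - λ uᵢ → 0` for unit vectors `uᵢ`, then `T ^ p uᵢ - λ ^ p uᵢ → 0` for every `p`, so in
`⟪Ω uᵢ, uᵢ⟫ = ∑ cⱼₖ ⟪A T ^ (n + j - k) uᵢ, T ^ (k + j) uᵢ⟫` every `T` may be replaced by `λ`;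
the binomial theorem sums the result to `(|λ|² - 1) ^ m (λ - λ̄) ^ n ⟪A uᵢ, uᵢ⟫`. As `Ω = 0`
this tends to `0`, while `⟪A uᵢ, uᵢ⟫` stays away from `0` because `A` is positive and bounded
below (`‖A x‖² ≤ ‖A‖ ⟪A x, x⟫`, seen through `√A`).

Boundary points of the spectrum are approximate eigenvalues: if `T - λ` were bounded below, so
would be `T - μ` for resolvent points `μ` near `λ`, uniformly, and a Neumann series around such
a `μ` would make `T - λ` invertible.
-/

open Filter Topology ComplexConjugate
open scoped InnerProductSpace

theorem sum_range_sum_range_choose_mul_pow {R : Type*} [CommRing R] (a b : R) (m n : ℕ) :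
    ∑ j ∈ Finset.range (m + 1), ∑ k ∈ Finset.range (n + 1),
      (-1 : R) ^ (m + n - (j + k)) * (m.choose j : R) * (n.choose k : R) *
        (a ^ (n + j - k) * b ^ (k + j)) = (a * b - 1) ^ m * (b - a) ^ n := by
  rw [sub_eq_add_neg, sub_eq_add_neg, add_pow, add_pow, Finset.sum_mul_sum]
  refine Finset.sum_congr rfl fun j hj => Finset.sum_congr rfl fun k hk => ?_
  rw [Finset.mem_range, Nat.lt_succ_iff] at hj hk
  rw [show m + n - (j + k) = (m - j) + (n - k) by omega, show n + j - k = (n - k) + j by omega,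
    neg_pow a]
  ring

theorem Complex.norm_eq_one_or_im_eq_zero_of_pow_mul_pow_eq_zero {z : ℂ} {m n : ℕ}
    (h : (conj z * z - 1) ^ m * (z - conj z) ^ n = 0) : ‖z‖ = 1 ∨ z.im = 0 := by
  rcases mul_eq_zero.mp h with h | h
  · left
    have : (normSq z : ℂ) = 1 := by
      rw [← mul_conj, mul_comm]
      exact sub_eq_zero.mp (pow_eq_zero_iff'.mp h).1
    rw [norm_def, show normSq z = 1 by exact_mod_cast this, Real.sqrt_one]
  · exact Or.inr (conj_eq_iff_im.mp (sub_eq_zero.mp (pow_eq_zero_iff'.mp h).1).symm)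

theorem tendsto_pow_apply_sub_smul {𝕜 E ι : Type*} [NontriviallyNormedField 𝕜]
    [NormedAddCommGroup E] [NormedSpace 𝕜 E] {l : Filter ι} {T : E →L[𝕜] E} {c : 𝕜} {u : ι → E}
    (h : Tendsto (fun i => T (u i) - c • u i) l (𝓝 0)) (p : ℕ) :
    Tendsto (fun i => (T ^ p) (u i) - c ^ p • u i) l (𝓝 0) := by
  induction p with
  | zero => simpa using tendsto_const_nhds
  | succ p ih =>
    have hTp : Tendsto (fun i => (T ^ p) (T (u i) - c • u i)) l (𝓝 0) :=
      ((T ^ p).continuous.tendsto' 0 0 (map_zero _)).comp h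
    convert hTp.add (ih.const_smul c) using 1
    · ext i
      simp only [pow_succ, mul_apply_eq_comp, map_sub, map_smul, smul_sub, smul_smul,
        mul_comm c]
      abel
    · simp

theorem tendsto_inner_pow_apply_sub {𝕜 E ι : Type*} [RCLike 𝕜] [NormedAddCommGroup E]
    [InnerProductSpace 𝕜 E] {l : Filter ι} {T : E →L[𝕜] E} {c : 𝕜} {u : ι → E} (A : E →L[𝕜] E)
    (hu : ∀ i, ‖u i‖ ≤ 1) (h : Tendsto (fun i => T (u i) - c • u i) l (𝓝 0)) (a b : ℕ) :
    Tendsto (fun i => ⟪A ((T ^ a) (u i)), (T ^ b) (u i)⟫_𝕜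
      - conj c ^ a * c ^ b * ⟪A (u i), u i⟫_𝕜) l (𝓝 0) := by
  have hA : Tendsto (fun i => A ((T ^ a) (u i) - c ^ a • u i)) l (𝓝 0) :=
    (A.continuous.tendsto' 0 0 (map_zero A)).comp (tendsto_pow_apply_sub_smul h a)
  have hTb : IsBoundedUnder (· ≤ ·) l (norm ∘ fun i => (T ^ b) (u i)) :=
    isBoundedUnder_of ⟨‖T ^ b‖, fun i => (T ^ b).le_opNorm_of_le (hu i) |>.trans_eq (mul_one _)⟩
  have hAu : IsBoundedUnder (· ≤ ·) l (norm ∘ fun i => A (c ^ a • u i)) :=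
    isBoundedUnder_of ⟨‖A‖ * ‖c ^ a‖, fun i => A.le_opNorm_of_le (by
      rw [norm_smul]; exact mul_le_of_le_one_right (norm_nonneg _) (hu i))⟩
  convert (hA.op_zero_isBoundedUnder_le hTb (fun x y : E => ⟪x, y⟫_𝕜) norm_inner_le_norm).add
    ((tendsto_pow_apply_sub_smul h b).op_zero_isBoundedUnder_le hAu (fun y x : E => ⟪x, y⟫_𝕜)
      fun y x => (norm_inner_le_norm x y).trans_eq (mul_comm _ _)) using 1
  · ext i
    simp only [map_sub, map_smul, inner_sub_left, inner_sub_right, inner_smul_left,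
      inner_smul_right, map_pow]
    ring
  · simp

theorem ContinuousLinearMap.norm_units_inv_le {𝕜 E : Type*} [NontriviallyNormedField 𝕜]
    [NormedAddCommGroup E] [NormedSpace 𝕜 E] (U : (E →L[𝕜] E)ˣ) {δ : ℝ} (hδ : 0 < δ)
    (h : ∀ x, δ * ‖x‖ ≤ ‖(U : E →L[𝕜] E) x‖) : ‖(↑U⁻¹ : E →L[𝕜] E)‖ ≤ δ⁻¹ := by
  refine opNorm_le_bound _ (inv_nonneg.mpr hδ.le) fun y => ?_
  rw [inv_mul_eq_div, le_div_iff₀ hδ, mul_comm]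
  simpa [← mul_apply_eq_comp] using h ((↑U⁻¹ : E →L[𝕜] E) y)

section OnHilbertSpace

variable {H : Type*} [NormedAddCommGroup H] [InnerProductSpace ℂ H] [CompleteSpace H]

theorem inner_omega_apply_self (A T : H →L[ℂ] H) (m n : ℕ) (x : H) :
    ⟪Omega A T m n x, x⟫_ℂ = ∑ j ∈ Finset.range (m + 1), ∑ k ∈ Finset.range (n + 1),
      (-1 : ℂ) ^ (m + n - (j + k)) * (m.choose j : ℂ) * (n.choose k : ℂ) *
        ⟪A ((T ^ (n + j - k)) x), (T ^ (k + j)) x⟫_ℂ := by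
  have hadj (p : ℕ) (v w : H) : ⟪(adjoint T ^ p) v, w⟫_ℂ = ⟪v, (T ^ p) w⟫_ℂ := by
    rw [← star_eq_adjoint, ← star_pow, star_eq_adjoint, adjoint_inner_left]
  simp only [Omega, sum_apply, sum_inner, smul_apply, comp_apply, inner_smul_left, hadj, map_mul,
    map_pow, map_neg, map_one, map_natCast]

theorem tendsto_inner_omega_apply_sub {ι : Type*} {l : Filter ι} (A T : H →L[ℂ] H) (m n : ℕ)
    {c : ℂ} {u : ι → H} (hu : ∀ i, ‖u i‖ ≤ 1) (h : Tendsto (fun i => T (u i) - c • u i) l (𝓝 0)) :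
    Tendsto (fun i => ⟪Omega A T m n (u i), u i⟫_ℂ
      - (conj c * c - 1) ^ m * (c - conj c) ^ n * ⟪A (u i), u i⟫_ℂ) l (𝓝 0) := by
  have hsum (i : ι) : ⟪Omega A T m n (u i), u i⟫_ℂ
      - (conj c * c - 1) ^ m * (c - conj c) ^ n * ⟪A (u i), u i⟫_ℂ
      = ∑ j ∈ Finset.range (m + 1), ∑ k ∈ Finset.range (n + 1),
        (-1 : ℂ) ^ (m + n - (j + k)) * (m.choose j : ℂ) * (n.choose k : ℂ) *
          (⟪A ((T ^ (n + j - k)) (u i)), (T ^ (k + j)) (u i)⟫_ℂ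
            - conj c ^ (n + j - k) * c ^ (k + j) * ⟪A (u i), u i⟫_ℂ) := by
    rw [inner_omega_apply_self, ← sum_range_sum_range_choose_mul_pow, Finset.sum_mul,
      ← Finset.sum_sub_distrib]
    refine Finset.sum_congr rfl fun j _ => ?_
    rw [Finset.sum_mul, ← Finset.sum_sub_distrib]
    exact Finset.sum_congr rfl fun k _ => by ring
  simp_rw [hsum]
  simpa using tendsto_finsetSum _ fun j _ => tendsto_finsetSum _ fun k _ =>
    (tendsto_inner_pow_apply_sub A hu h (n + j - k) (k + j)).const_mul
      ((-1 : ℂ) ^ (m + n - (j + k)) * (m.choose j : ℂ) * (n.choose k : ℂ))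

theorem ContinuousLinearMap.IsPositive.norm_apply_sq_le {A : H →L[ℂ] H} (hA : A.IsPositive)
    (x : H) :
    ‖A x‖ ^ 2 ≤ ‖A‖ * RCLike.re ⟪A x, x⟫_ℂ := by
  set S := CFC.sqrt A
  have hS : S * S = A := CFC.sqrt_mul_sqrt_self A ((nonneg_iff_isPositive A).mpr hA)
  have hSsa : IsSelfAdjoint S := (CFC.sqrt_nonneg A).isSelfAdjoint
  have hinner : RCLike.re ⟪A x, x⟫_ℂ = ‖S x‖ ^ 2 := by
    rw [← hS]
    change RCLike.re ⟪S (S x), x⟫_ℂ = _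
    rw [← adjoint_inner_right, ← star_eq_adjoint, hSsa.star_eq, inner_self_eq_norm_sq]
  calc ‖A x‖ ^ 2 = ‖S (S x)‖ ^ 2 := by rw [← hS]; rfl
    _ ≤ (‖S‖ * ‖S x‖) ^ 2 := by gcongr; exact S.le_opNorm _
    _ = ‖A‖ * RCLike.re ⟪A x, x⟫_ℂ := by
      rw [hinner, ← hS, hSsa.norm_mul_self, mul_pow]

theorem exists_pos_mul_norm_le_of_not_inApproxSpectrum {T : H →L[ℂ] H} {c : ℂ}
    (h : ¬ InApproxSpectrum T c) : ∃ δ > 0, ∀ x, δ * ‖x‖ ≤ ‖(T - c • (1 : H →L[ℂ] H)) x‖ := by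
  by_contra! hδ
  choose x hx using fun k : ℕ => hδ (1 / (k + 1)) (by positivity)
  have hx0 (k : ℕ) : x k ≠ 0 := by
    rintro h0
    simpa [h0] using hx k
  refine h ⟨fun k => ‖x k‖⁻¹ • x k, fun k => norm_smul_inv_norm (hx0 k), ?_⟩
  refine squeeze_zero (fun _ => norm_nonneg _) (fun k => ?_)
    tendsto_one_div_add_atTop_nhds_zero_nat
  rw [map_smul_of_tower, norm_smul, norm_inv, norm_norm,
    inv_mul_le_iff₀ (norm_pos_iff.mpr (hx0 k)), mul_comm]
  exact (hx k).le

theorem ContinuousLinearMap.IsPositive.exists_pos_mul_norm_sq_le_re_inner {A : H →L[ℂ] H}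
    (hA : A.IsPositive) (h : ¬ InApproxSpectrum A 0) :
    ∃ δ > 0, ∀ x, δ * ‖x‖ ^ 2 ≤ RCLike.re ⟪A x, x⟫_ℂ := by
  obtain ⟨δ, hδ, hbound⟩ := exists_pos_mul_norm_le_of_not_inApproxSpectrum h
  refine ⟨δ ^ 2 / (‖A‖ + 1), by positivity, fun x => ?_⟩
  have hre : 0 ≤ RCLike.re ⟪A x, x⟫_ℂ := hA.re_inner_nonneg_left x
  have hAx : δ * ‖x‖ ≤ ‖A x‖ := by simpa using hbound x
  rw [div_mul_eq_mul_div, div_le_iff₀ (by positivity)]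
  calc δ ^ 2 * ‖x‖ ^ 2 = (δ * ‖x‖) ^ 2 := by ring
    _ ≤ ‖A x‖ ^ 2 := by gcongr
    _ ≤ ‖A‖ * RCLike.re ⟪A x, x⟫_ℂ := hA.norm_apply_sq_le x
    _ ≤ RCLike.re ⟪A x, x⟫_ℂ * (‖A‖ + 1) := by nlinarith

theorem inApproxSpectrum_of_mem_frontier_spectrum {T : H →L[ℂ] H} {c : ℂ}
    (hc : c ∈ frontier (spectrum ℂ T)) : InApproxSpectrum T c := by
  by_contra h
  obtain ⟨δ, hδ, hbound⟩ := exists_pos_mul_norm_le_of_not_inApproxSpectrum h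
  obtain ⟨μ, hμ, hdist⟩ : ∃ μ ∉ spectrum ℂ T, dist c μ < δ / 2 :=
    Metric.mem_closure_iff.mp (frontier_subset_closure (frontier_compl (spectrum ℂ T) ▸ hc)) _
      (by positivity)
  have hμc : ‖μ - c‖ < δ / 2 := by rwa [← dist_eq_norm, dist_comm]
  set U := (spectrum.notMem_iff.mp hμ).unit
  have hU : ∀ x, δ / 2 * ‖x‖ ≤ ‖(U : H →L[ℂ] H) x‖ := fun x => by
    have hdiff : (U : H →L[ℂ] H) x = (μ - c) • x - (T - c • (1 : H →L[ℂ] H)) x := by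
      simp [U, Algebra.algebraMap_eq_smul_one, sub_smul]
    have hshift : ‖μ - c‖ * ‖x‖ ≤ δ / 2 * ‖x‖ := by gcongr
    rw [hdiff, norm_sub_rev]
    linarith [hbound x, hshift, norm_sub_norm_le ((T - c • (1 : H →L[ℂ] H)) x) ((μ - c) • x),
      norm_smul (μ - c) x]
  have hsmall : ‖(μ - c) • (↑U⁻¹ : H →L[ℂ] H)‖ < 1 := by
    calc ‖(μ - c) • (↑U⁻¹ : H →L[ℂ] H)‖ ≤ ‖μ - c‖ * (δ / 2)⁻¹ := by
          rw [norm_smul]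
          gcongr
          exact norm_units_inv_le U (by positivity) hU
      _ < δ / 2 * (δ / 2)⁻¹ := by gcongr
      _ = 1 := mul_inv_cancel₀ (by positivity)
  have hfactor : algebraMap ℂ (H →L[ℂ] H) c - T = U * (1 - (μ - c) • (↑U⁻¹ : H →L[ℂ] H)) := by
    rw [mul_sub, mul_one, mul_smul_comm, Units.mul_inv]
    simp [U, Algebra.algebraMap_eq_smul_one, sub_smul]
  exact (spectrum.isClosed T).frontier_subset hc (spectrum.mem_resolventSet_iff.mpr
    (hfactor ▸ U.isUnit.mul ⟨Units.oneSub _ hsmall, rfl⟩))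

theorem norm_eq_one_or_im_eq_zero_of_inApproxSpectrum {A T : H →L[ℂ] H} (hA : A.IsPositive)
    {m n : ℕ} (h : Omega A T m n = 0) (hAap : ¬ InApproxSpectrum A 0) {c : ℂ}
    (hc : InApproxSpectrum T c) : ‖c‖ = 1 ∨ c.im = 0 := by
  obtain ⟨u, hu, hTu⟩ := hc
  obtain ⟨δ, hδ, hAu⟩ := hA.exists_pos_mul_norm_sq_le_re_inner hAap
  set S := (conj c * c - 1) ^ m * (c - conj c) ^ n
  have hlim : Tendsto (fun i => S * ⟪A (u i), u i⟫_ℂ) atTop (𝓝 0) := by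
    have hTu' : Tendsto (fun i => T (u i) - c • u i) atTop (𝓝 0) := by
      simpa [tendsto_zero_iff_norm_tendsto_zero] using hTu
    simpa [h] using (tendsto_inner_omega_apply_sub A T m n (fun i => (hu i).le) hTu').neg
  have hS : ‖S‖ * δ ≤ 0 := by
    refine ge_of_tendsto' (tendsto_zero_iff_norm_tendsto_zero.mp hlim) fun i => ?_
    rw [norm_mul S]
    refine mul_le_mul_of_nonneg_left ?_ (norm_nonneg S)
    simpa [hu i] using (hAu (u i)).trans (RCLike.re_le_norm _)
  exact Complex.norm_eq_one_or_im_eq_zero_of_pow_mul_pow_eq_zero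
    (norm_le_zero_iff.mp (nonpos_of_mul_nonpos_left hS hδ))

end OnHilbertSpace

theorem approx_spectrum_of_isosymmetric {H : Type*} [NormedAddCommGroup H]
    [InnerProductSpace ℂ H] [CompleteSpace H] (A T : H →L[ℂ] H) (hA : A.IsPositive)
    (m n : ℕ) (h : Omega A T m n = 0)
    (hAap : ¬ InApproxSpectrum A 0) :
    (∀ lam : ℂ, InApproxSpectrum T lam → ‖lam‖ = 1 ∨ lam.im = 0) ∧
      ∀ lam ∈ frontier (spectrum ℂ T), ‖lam‖ = 1 ∨ lam.im = 0 :=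
  ⟨fun _ hlam => norm_eq_one_or_im_eq_zero_of_inApproxSpectrum hA h hAap hlam,
    fun _ hlam => norm_eq_one_or_im_eq_zero_of_inApproxSpectrum hA h hAap
      (inApproxSpectrum_of_mem_frontier_spectrum hlam)⟩
end

section
/- Every (A,(m,n))-isosymmetric operator T has the single valued extension property, provided A is injective (0 ∉ σ_p(A)). More precisely, if f : D → H is analytic on an open set D and (T − λ)f(λ) = 0 for all λ ∈ D, then f ≡ 0 on D. -/
open ContinuousLinearMap
open scoped InnerProductSpace ComplexConjugate

/-! On an eigenvector `T x = λ • x` the quadratic form of `Ω_A^{m,n}(T)` equals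
`(|λ|² - 1)^m (λ̄ - λ)^n ⟪x, A x⟫`, and `⟪x, A x⟫ = ‖A^{1/2} x‖²`. So when `A` is positive and
injective, `T` has no eigenvalues off `ℝ ∪ 𝕊¹`, and a local solution `f` of `(T - λ) f(λ) = 0`
vanishes on the dense set `D \ (ℝ ∪ 𝕊¹)`, hence on `D` by continuity. -/

theorem sum_sign_choose_mul_pow_pow {R : Type*} [CommRing R] (c l : R) (m n : ℕ) :
    ∑ j ∈ Finset.range (m + 1), ∑ k ∈ Finset.range (n + 1),
      (-1 : R) ^ (m + n - (j + k)) * m.choose j * n.choose k * (c ^ (k + j) * l ^ (n + j - k))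
      = (c * l - 1) ^ m * (c - l) ^ n := by
  rw [sub_eq_add_neg, add_pow, sub_eq_add_neg, add_pow, Finset.sum_mul_sum]
  refine Finset.sum_congr rfl fun j hj => Finset.sum_congr rfl fun k hk => ?_
  have hjm : j ≤ m := Nat.lt_succ_iff.mp (Finset.mem_range.mp hj)
  have hkn : k ≤ n := Nat.lt_succ_iff.mp (Finset.mem_range.mp hk)
  rw [show m + n - (j + k) = (m - j) + (n - k) by omega, show n + j - k = j + (n - k) by omega,
    neg_pow l]
  ring

theorem ContinuousLinearMap.pow_apply_of_apply_eq_smul {R M : Type*} [Semiring R]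
    [TopologicalSpace M] [AddCommMonoid M] [Module R M] {T : M →L[R] M} {x : M} {lam : R}
    (hx : T x = lam • x) (p : ℕ) : (T ^ p) x = lam ^ p • x := by
  induction p with
  | zero => simp
  | succ p ih => rw [pow_succ', mul_apply_eq_comp, ih, map_smul, hx, smul_smul, pow_succ]

theorem Complex.dense_setOf_im_ne_zero_and_norm_ne_one :
    Dense {z : ℂ | z.im ≠ 0 ∧ ‖z‖ ≠ 1} := by
  have hcompl : {z : ℂ | z.im ≠ 0 ∧ ‖z‖ ≠ 1} = (Complex.im ⁻¹' {0} ∪ Metric.sphere 0 1)ᶜ := by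
    ext z; simp
  rw [hcompl, ← interior_eq_empty_iff_dense_compl,
    interior_union_isClosed_of_interior_empty (isClosed_singleton.preimage Complex.continuous_im)
      (interior_sphere 0 one_ne_zero), Complex.interior_preimage_im, interior_singleton,
    Set.preimage_empty]

section
variable {H : Type*} [NormedAddCommGroup H] [InnerProductSpace ℂ H] [CompleteSpace H]

theorem ContinuousLinearMap.IsPositive.apply_eq_zero_of_inner_self_eq_zero {A : H →L[ℂ] H}
    (hA : A.IsPositive) {x : H} (hx : ⟪A x, x⟫_ℂ = 0) : A x = 0 := by
  set S := CFC.sqrt A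
  have hS : IsSelfAdjoint S := (CFC.sqrt_nonneg A).isSelfAdjoint
  have hSS : S * S = A := CFC.sqrt_mul_sqrt_self A ((nonneg_iff_isPositive A).mpr hA)
  have hSx : S x = 0 := by
    rw [← inner_self_eq_zero (𝕜 := ℂ), ← hx, ← hSS, mul_apply_eq_comp,
      ← adjoint_inner_left, hS.adjoint_eq]
  rw [← hSS, mul_apply_eq_comp, hSx, map_zero]

theorem inner_Omega_apply_of_apply_eq_smul (A T : H →L[ℂ] H) (m n : ℕ) {x : H} {lam : ℂ}
    (hx : T x = lam • x) :
    ⟪x, Omega A T m n x⟫_ℂ = (conj lam * lam - 1) ^ m * (conj lam - lam) ^ n * ⟪x, A x⟫_ℂ := by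
  rw [← sum_sign_choose_mul_pow_pow, Finset.sum_mul, Omega, sum_apply, inner_sum]
  refine Finset.sum_congr rfl fun j _ => ?_
  rw [Finset.sum_mul, sum_apply, inner_sum]
  refine Finset.sum_congr rfl fun k _ => ?_
  rw [smul_apply, inner_smul_right, comp_apply, comp_apply, ← star_eq_adjoint, ← star_pow,
    star_eq_adjoint, adjoint_inner_right, pow_apply_of_apply_eq_smul hx,
    pow_apply_of_apply_eq_smul hx, map_smul, inner_smul_left, inner_smul_right, map_pow]
  ring

theorem eq_zero_of_apply_eq_smul_of_Omega_eq_zero {A T : H →L[ℂ] H} (hA : A.IsPositive)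
    (hAinj : Function.Injective A) {m n : ℕ} (h : Omega A T m n = 0) {x : H} {lam : ℂ}
    (hx : T x = lam • x) (him : lam.im ≠ 0) (hnorm : ‖lam‖ ≠ 1) : x = 0 := by
  have hcoef : (conj lam * lam - 1) ^ m * (conj lam - lam) ^ n ≠ 0 := by
    refine mul_ne_zero (pow_ne_zero _ ?_) (pow_ne_zero _ ?_)
    · rw [Complex.conj_mul', sub_ne_zero]
      exact_mod_cast (pow_eq_one_iff_of_nonneg (norm_nonneg lam) two_ne_zero).not.mpr hnorm
    · exact sub_ne_zero.mpr (mt Complex.conj_eq_iff_im.mp him)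
  have hAx : ⟪A x, x⟫_ℂ = 0 := by
    have := inner_Omega_apply_of_apply_eq_smul A T m n hx
    rw [h, zero_apply, inner_zero_right, eq_comm] at this
    rw [hA.inner_left_eq_inner_right]
    exact (mul_eq_zero.mp this).resolve_left hcoef
  exact hAinj (by rw [hA.apply_eq_zero_of_inner_self_eq_zero hAx, map_zero])

end

theorem isosymmetric_SVEP {H : Type*} [NormedAddCommGroup H] [InnerProductSpace ℂ H]
    [CompleteSpace H] (A T : H →L[ℂ] H) (hA : A.IsPositive)
    (hAinj : Function.Injective A) (m n : ℕ) (h : Omega A T m n = 0)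
    (D : Set ℂ) (hD : IsOpen D) (f : ℂ → H) (hf : ∀ lam ∈ D, AnalyticAt ℂ f lam)
    (hfeq : ∀ lam ∈ D, (T - lam • (1 : H →L[ℂ] H)) (f lam) = 0) :
    ∀ lam ∈ D, f lam = 0 := by
  have hzero : Set.EqOn f 0 (D ∩ {z : ℂ | z.im ≠ 0 ∧ ‖z‖ ≠ 1}) := fun z ⟨hzD, him, hnorm⟩ =>
    have hTz : T (f z) = z • f z := sub_eq_zero.mp (by simpa using hfeq z hzD)
    eq_zero_of_apply_eq_smul_of_Omega_eq_zero hA hAinj h hTz him hnorm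
  exact hzero.of_subset_closure (fun z hz => (hf z hz).continuousAt.continuousWithinAt)
    continuousOn_const Set.inter_subset_left
    (Complex.dense_setOf_im_ne_zero_and_norm_ne_one.open_subset_closure_inter hD)
end

section
/- Let T, Q ∈ B(H) be doubly commuting (TQ = QT and TQ* = Q*T), with Q nilpotent of order r (Q^r = 0). If T is (A,(m,n))-isosymmetric, then T + Q is (A,(m+2r−2, n+2r−1))-isosymmetric. -/
open ContinuousLinearMap

/-!
Write `L = L_{T*}` and `R = R_T` for left multiplication by `T*` and right multiplication by `T`
on `B(H)`, and `L'`, `R'` for those of `Q`. Then `Ω_A^{m,n}(T) = (LR - 1)^m (L - R)^n A`, and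
`L, R, L', R'` commute pairwise. In the commutative ring they generate,
`(L + L')(R + R') - 1 = (LR - 1) + f` and `(L + L') - (R + R') = (L - R) + e`, where `e` and `f`
are combinations of the nilpotents `L'` and `R'`, hence `e^(2r-1) = f^(2r-1) = 0`. By the binomial
theorem `(LR - 1)^m (L - R)^n` divides the corresponding element for `T + Q` with exponents
`m + 2r - 2` and `n + 2r - 1`.
-/

open Finset

def omegaElem {R : Type*} [Ring R] (a b : R) (m n : ℕ) : R :=
  (a * b - 1) ^ m * (a - b) ^ n

theorem map_omegaElem {R S F : Type*} [Ring R] [Ring S] [FunLike F R S] [RingHomClass F R S]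
    (f : F) (a b : R) (m n : ℕ) : f (omegaElem a b m n) = omegaElem (f a) (f b) m n := by
  simp only [omegaElem, map_mul, map_pow, map_sub, map_one]

section CommRing

variable {R : Type*} [CommRing R]

theorem omegaElem_eq_sum {𝕜 : Type*} [CommRing 𝕜] [Algebra 𝕜 R] (a b : R) (m n : ℕ) :
    omegaElem a b m n = ∑ j ∈ range (m + 1), ∑ k ∈ range (n + 1),
      ((-1 : 𝕜) ^ (m + n - (j + k)) * m.choose j * n.choose k) •
        (a ^ (k + j) * b ^ (n + j - k)) := by
  rw [omegaElem, sub_eq_add_neg, sub_eq_add_neg, add_pow, add_pow, sum_mul_sum]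
  refine sum_congr rfl fun j hj => sum_congr rfl fun k hk => ?_
  have hj : j ≤ m := Nat.lt_succ_iff.mp (mem_range.mp hj)
  have hk : k ≤ n := Nat.lt_succ_iff.mp (mem_range.mp hk)
  rw [show m + n - (j + k) = (m - j) + (n - k) by omega, show n + j - k = j + (n - k) by omega,
    Algebra.smul_def]
  simp only [map_mul, map_pow, map_neg, map_one, map_natCast, neg_pow b]
  ring

theorem mul_add_mul_pow_eq_zero {p q : R} {k l : ℕ} (hp : p ^ k = 0) (hq : q ^ l = 0) (u v : R) :
    (u * p + v * q) ^ (k + l - 1) = 0 :=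
  (Commute.all _ _).add_pow_add_eq_zero_of_pow_eq_zero (by rw [mul_pow, hp, mul_zero])
    (by rw [mul_pow, hq, mul_zero])

theorem omegaElem_dvd_omegaElem_add {a b p q : R} {k l m n M N : ℕ} (hp : p ^ k = 0)
    (hq : q ^ l = 0) (hM : k + l - 1 + m ≤ M + 1) (hN : k + l - 1 + n ≤ N + 1) :
    omegaElem a b m n ∣ omegaElem (a + p) (b + q) M N := by
  have hmul : (a + p) * (b + q) - 1 = (a * b - 1) + ((b + q) * p + a * q) := by ring
  have hsub : (a + p) - (b + q) = (a - b) + (1 * p + (-1) * q) := by ring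
  rw [omegaElem, omegaElem, hmul, hsub]
  exact mul_dvd_mul
    ((Commute.all _ _).pow_dvd_add_pow_of_pow_eq_zero_right hM (mul_add_mul_pow_eq_zero hp hq _ _))
    ((Commute.all _ _).pow_dvd_add_pow_of_pow_eq_zero_right hN (mul_add_mul_pow_eq_zero hp hq _ _))

end CommRing

open scoped IsMulCommutative in
theorem Commute.omegaElem_eq_sum {E 𝕜 : Type*} [Ring E] [CommRing 𝕜] [Algebra 𝕜 E]
    {a b : E} (hab : Commute a b) (m n : ℕ) :
    omegaElem a b m n = ∑ j ∈ range (m + 1), ∑ k ∈ range (n + 1),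
      ((-1 : 𝕜) ^ (m + n - (j + k)) * m.choose j * n.choose k) •
        (a ^ (k + j) * b ^ (n + j - k)) := by
  let S := Algebra.adjoin 𝕜 ({a, b} : Set E)
  have : IsMulCommutative S := Algebra.isMulCommutative_adjoin 𝕜 <| by
    simp only [Set.mem_insert_iff, Set.mem_singleton_iff]
    rintro x (rfl | rfl) y (rfl | rfl) <;> first | rfl | exact hab.eq | exact hab.symm.eq
  have := congrArg S.val <| _root_.omegaElem_eq_sum (𝕜 := 𝕜)
    (⟨a, Algebra.subset_adjoin (by simp)⟩ : S) ⟨b, Algebra.subset_adjoin (by simp)⟩ m n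
  simp only [map_omegaElem, map_sum, map_smul, map_mul, map_pow] at this
  exact this

open scoped IsMulCommutative in
theorem exists_omegaElem_add_eq_mul {E : Type*} [Ring E] {a b p q : E} {k l m n M N : ℕ}
    (hab : Commute a b) (hap : Commute a p) (haq : Commute a q) (hbp : Commute b p)
    (hbq : Commute b q) (hpq : Commute p q) (hp : p ^ k = 0) (hq : q ^ l = 0)
    (hM : k + l - 1 + m ≤ M + 1) (hN : k + l - 1 + n ≤ N + 1) :
    ∃ c, omegaElem (a + p) (b + q) M N = c * omegaElem a b m n := by
  let S := Subring.closure ({a, b, p, q} : Set E)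
  have : IsMulCommutative S := Subring.isMulCommutative_closure <| by
    simp only [Set.mem_insert_iff, Set.mem_singleton_iff]
    rintro x (rfl | rfl | rfl | rfl) y (rfl | rfl | rfl | rfl) <;>
      first | rfl | assumption | exact Commute.symm ‹_›
  let incl (x : E) (hx : x ∈ ({a, b, p, q} : Set E)) : S := ⟨x, Subring.subset_closure hx⟩
  obtain ⟨c, hc⟩ := omegaElem_dvd_omegaElem_add (a := incl a (by simp)) (b := incl b (by simp))
    (p := incl p (by simp)) (q := incl q (by simp)) (Subtype.ext (by simpa [incl] using hp))
    (Subtype.ext (by simpa [incl] using hq)) hM hN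
  refine ⟨c, ?_⟩
  have := congrArg S.subtype hc
  rw [mul_comm, map_mul, map_omegaElem, map_omegaElem, map_add, map_add] at this
  exact this

section Multiplication

variable {R A : Type*} [CommSemiring R] [Semiring A] [Algebra R A] {a b : A}

theorem Commute.mulLeft (h : Commute a b) :
    Commute (LinearMap.mulLeft R a) (LinearMap.mulLeft R b) := by
  ext x
  simp only [Module.End.mul_apply, LinearMap.mulLeft_apply, ← mul_assoc, h.eq]

theorem Commute.mulRight (h : Commute a b) :
    Commute (LinearMap.mulRight R a) (LinearMap.mulRight R b) := by
  ext x
  simp only [Module.End.mul_apply, LinearMap.mulRight_apply, mul_assoc, h.eq]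

theorem LinearMap.mulLeft_add (a b : A) :
    LinearMap.mulLeft R (a + b) = LinearMap.mulLeft R a + LinearMap.mulLeft R b := by
  ext x
  simp [add_mul]

theorem LinearMap.mulRight_add (a b : A) :
    LinearMap.mulRight R (a + b) = LinearMap.mulRight R a + LinearMap.mulRight R b := by
  ext x
  simp [mul_add]

end Multiplication

section Operator

variable {H : Type*} [NormedAddCommGroup H] [InnerProductSpace ℂ H] [CompleteSpace H]

theorem Omega_eq_omegaElem_apply (A T : H →L[ℂ] H) (m n : ℕ) :
    Omega A T m n =
      omegaElem (LinearMap.mulLeft ℂ (adjoint T)) (LinearMap.mulRight ℂ T) m n A := by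
  rw [(LinearMap.commute_mulLeft_right _ _).omegaElem_eq_sum (𝕜 := ℂ)]
  simp only [LinearMap.sum_apply, LinearMap.smul_apply, Module.End.mul_apply,
    LinearMap.pow_mulLeft, LinearMap.pow_mulRight, LinearMap.mulLeft_apply,
    LinearMap.mulRight_apply]
  rfl

theorem exists_Omega_add_eq_apply (A : H →L[ℂ] H) {T Q : H →L[ℂ] H} (hTQ : Commute T Q)
    {r m n M N : ℕ} (hQ : Q ^ r = 0) (hM : r + r - 1 + m ≤ M + 1)
    (hN : r + r - 1 + n ≤ N + 1) :
    ∃ c : Module.End ℂ (H →L[ℂ] H), Omega A (T + Q) M N = c (Omega A T m n) := by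
  have hTQ' : Commute (adjoint T) (adjoint Q) := by
    simpa only [star_eq_adjoint] using hTQ.star_star
  have hQ' : adjoint Q ^ r = 0 := by
    rw [← star_eq_adjoint, ← star_pow, hQ, star_zero]
  obtain ⟨c, hc⟩ := exists_omegaElem_add_eq_mul (m := m) (n := n)
    (LinearMap.commute_mulLeft_right _ _) hTQ'.mulLeft (LinearMap.commute_mulLeft_right _ _)
    (LinearMap.commute_mulLeft_right _ _).symm hTQ.mulRight
    (LinearMap.commute_mulLeft_right _ _)
    (by rw [LinearMap.pow_mulLeft, hQ', LinearMap.mulLeft_zero_eq_zero ℂ])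
    (by rw [LinearMap.pow_mulRight, hQ, LinearMap.mulRight_zero_eq_zero ℂ]) hM hN
  refine ⟨c, ?_⟩
  rw [Omega_eq_omegaElem_apply, map_add, LinearMap.mulLeft_add, LinearMap.mulRight_add, hc,
    Module.End.mul_apply, Omega_eq_omegaElem_apply]

end Operator

theorem isosymmetric_add_nilpotent_general {H : Type*} [NormedAddCommGroup H]
    [InnerProductSpace ℂ H] [CompleteSpace H] (A T Q : H →L[ℂ] H)
    (m n r : ℕ) (hr : 1 ≤ r)
    (hc1 : T ∘L Q = Q ∘L T)
    (hQ : Q ^ r = 0) (h : Omega A T m n = 0) :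
    Omega A (T + Q) (m + 2 * r - 2) (n + 2 * r - 1) = 0 := by
  obtain ⟨c, hc⟩ := exists_Omega_add_eq_apply A (m := m) (n := n) (M := m + 2 * r - 2)
    (N := n + 2 * r - 1) hc1 hQ (by omega) (by omega)
  rw [hc, h, map_zero]

theorem isosymmetric_add_nilpotent {H : Type*} [NormedAddCommGroup H]
    [InnerProductSpace ℂ H] [CompleteSpace H] (A T Q : H →L[ℂ] H) (hA : A.IsPositive)
    (m n r : ℕ) (hr : 1 ≤ r)
    (hc1 : T ∘L Q = Q ∘L T) (hc2 : T ∘L (adjoint Q) = (adjoint Q) ∘L T)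
    (hQ : Q ^ r = 0) (h : Omega A T m n = 0) :
    Omega A (T + Q) (m + 2 * r - 2) (n + 2 * r - 1) = 0 :=
  isosymmetric_add_nilpotent_general A T Q m n r hr hc1 hQ h
end
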